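/- Let h ∈ 𝕃 with deg h = −1 and f ∈ 𝕃 ∖ 𝔽_q(t). If ℓ = (deg A_1 + 1) + (deg A_2 + 1) + ⋯ + (deg A_k + 1) + i with k ≥ 0 and 0 ≤ i ≤ deg A_{k+1}, then the matrix product M_h(f)·M_h(F_h(f))·⋯·M_h(F_h^{ℓ−1}(f)) equals the 2×2 matrix with rows (P_{k+1} − [hⁱA_{k+1}]·P_k, P_k) and (Q_{k+1} − [hⁱA_{k+1}]·Q_k, Q_k). -/

import Mathlib

/-!
Setting: `q` a prime power is formalized as `q = Fintype.card Fq` for a finite field `Fq`.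
The field `K = 𝔽_q((t⁻¹))` of formal Laurent series in `t⁻¹` is realized as
`LaurentSeries Fq = 𝔽_q((X))` with `X = t⁻¹` (so `deg f = -(X-adic order of f)`).
-/

open scoped Classical
open MeasureTheory Filter
open scoped ENNReal

noncomputable section

variable (Fq : Type) [Field Fq] [Fintype Fq]

/-- `t ∈ K = 𝔽_q((t⁻¹))`, realized as the inverse of the variable `X` of
`LaurentSeries Fq`. -/
def tvar : LaurentSeries Fq := (HahnSeries.single (1 : ℤ) (1 : Fq))⁻¹

/-- The degree `deg f ∈ ℤ ∪ {-∞}` of `f ∈ K`, with `deg 0 = ⊥ = -∞`. -/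
def fdeg (f : LaurentSeries Fq) : WithBot ℤ :=
  if f = 0 then ⊥ else ((-f.order : ℤ) : WithBot ℤ)

/-- The absolute value `|f| = q^(deg f)`, with `|0| = 0`. -/
def fabs (f : LaurentSeries Fq) : ℝ :=
  if f = 0 then 0 else (Fintype.card Fq : ℝ) ^ (-f.order)

/-- Keep only the part of `f` with `X`-exponents `≤ N`, i.e. `t`-exponents `≥ -N`. -/
def cutoff (N : ℤ) (f : LaurentSeries Fq) : LaurentSeries Fq where
  coeff j := if j ≤ N then f.coeff j else 0
  isPWO_support' := f.isPWO_support'.mono (by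
    intro j hj
    by_cases hN : j ≤ N
    · simpa [Function.mem_support, hN] using hj
    · simp [Function.mem_support, hN] at hj)

/-- The polynomial part `[f] ∈ 𝔽_q[t]` of `f` (the part with `t`-exponents `≥ 0`). -/
def polyPart (f : LaurentSeries Fq) : LaurentSeries Fq := cutoff Fq 0 f

/-- The fractional part `{f} = f - [f]`. -/
def fracPart (f : LaurentSeries Fq) : LaurentSeries Fq := f - polyPart Fq f

/-- `𝒪 = {f ∈ K : |f| ≤ 1}`. -/
def setO : Set (LaurentSeries Fq) := {f | fabs Fq f ≤ 1}

/-- `𝕃 = {f ∈ K : |f| < 1}`. -/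
def setL : Set (LaurentSeries Fq) := {f | fabs Fq f < 1}

/-- `𝕁₀ = {f ∈ 𝒪 : deg f = 0}`. -/
def setJ0 : Set (LaurentSeries Fq) := {f | fdeg Fq f = ((0 : ℤ) : WithBot ℤ)}

/-- The embedding `𝔽_q[t] → K`, sending a polynomial `P` to `P(t)`. -/
def polyT (P : Polynomial Fq) : LaurentSeries Fq := Polynomial.aeval (tvar Fq) P

/-- The subfield `𝔽_q(t) ⊆ K` of rational functions (as a subset). -/
def ratSet : Set (LaurentSeries Fq) :=
  {g | ∃ P Q : Polynomial Fq, Q ≠ 0 ∧ g = polyT Fq P / polyT Fq Q}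

/-- The Artin map `Ψ(f) = {1/f}`. -/
def artin (f : LaurentSeries Fq) : LaurentSeries Fq := fracPart Fq f⁻¹

/-- The partial quotients `A_n = [1/Ψ^{n-1}(f)]` (`n ≥ 1`). -/
def pquot (f : LaurentSeries Fq) (n : ℕ) : LaurentSeries Fq :=
  polyPart Fq (((artin Fq)^[n - 1] f)⁻¹)

/-- `convPQ f (k+1) = (P_k, Q_k)`, the principal convergents;
`convPQ f 0 = (P_{-1}, Q_{-1}) = (1, 0)`, `convPQ f 1 = (P_0, Q_0) = (0, 1)`. -/
def convPQ (f : LaurentSeries Fq) : ℕ → LaurentSeries Fq × LaurentSeries Fq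
  | 0 => (1, 0)
  | 1 => (0, 1)
  | (n + 2) => (pquot Fq f (n + 1) * (convPQ f (n + 1)).1 + (convPQ f n).1,
                pquot Fq f (n + 1) * (convPQ f (n + 1)).2 + (convPQ f n).2)

/-- `Pc f (k+1) = P_k`. -/
def Pc (f : LaurentSeries Fq) (n : ℕ) : LaurentSeries Fq := (convPQ Fq f n).1

/-- `Qc f (k+1) = Q_k`. -/
def Qc (f : LaurentSeries Fq) (n : ℕ) : LaurentSeries Fq := (convPQ Fq f n).2

/-- The geometric Farey map `F` on `𝕃 × ℤ`. -/
def fareyGeom (p : LaurentSeries Fq × ℤ) : LaurentSeries Fq × ℤ :=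
  if fdeg Fq p.1 < ((-1 : ℤ) : WithBot ℤ) ∨ p.2 < 0 then
    (fracPart Fq (tvar Fq * p.1), p.2 + 1)
  else
    (fracPart Fq ((tvar Fq * p.1)⁻¹), -(p.2 + 1))

/-- The algebraic Farey map `F_h` associated to `h`. -/
def fareyAlg (h : LaurentSeries Fq) (f : LaurentSeries Fq) : LaurentSeries Fq :=
  if fdeg Fq f = ((0 : ℤ) : WithBot ℤ) then
    (1 - polyPart Fq ((1 - h) * f⁻¹) * f) / f
  else
    f / (1 - polyPart Fq ((1 - h) * f⁻¹) * f)

/-- The matrix `M(f, n)` associated to the geometric Farey map. -/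
def geomMat (p : LaurentSeries Fq × ℤ) : Matrix (Fin 2) (Fin 2) (LaurentSeries Fq) :=
  if p.2 < 0 then
    !![(tvar Fq)⁻¹, (tvar Fq)⁻¹ * polyPart Fq (tvar Fq * p.1); 0, 1]
  else if fdeg Fq p.1 = ((-1 : ℤ) : WithBot ℤ) then
    !![0, 1; tvar Fq, tvar Fq * polyPart Fq ((tvar Fq * p.1)⁻¹)]
  else
    !![1, 0; 0, tvar Fq]

/-- The matrix `M_h(f)` associated to the algebraic Farey map `F_h`. -/
def algMat (h : LaurentSeries Fq) (f : LaurentSeries Fq) :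
    Matrix (Fin 2) (Fin 2) (LaurentSeries Fq) :=
  if fdeg Fq f = ((0 : ℤ) : WithBot ℤ) then
    !![0, 1; 1, polyPart Fq ((1 - h) * f⁻¹)]
  else
    !![1, 0; polyPart Fq ((1 - h) * f⁻¹), 1]

/-- The leading term `LT(f)` of `f`. -/
def leadTerm (f : LaurentSeries Fq) : LaurentSeries Fq :=
  HahnSeries.single f.order (f.coeff f.order)

/-- `G(f) = 1/f - 1/LT(f)`. -/
def Gmap (f : LaurentSeries Fq) : LaurentSeries Fq := f⁻¹ - (leadTerm Fq f)⁻¹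

/-- The Farey map `F_𝕁` of Berthé–Nakada–Natsui. -/
def fareyBNN (f : LaurentSeries Fq) : LaurentSeries Fq :=
  if ((0 : ℤ) : WithBot ℤ) ≤ fdeg Fq (Gmap Fq f) then (Gmap Fq f)⁻¹
  else f⁻¹ - polyPart Fq f⁻¹

/-- The Borel measurable structure on `K`, for the valued-field topology. -/
instance : MeasurableSpace (LaurentSeries Fq) := borel _
instance : BorelSpace (LaurentSeries Fq) := ⟨rfl⟩

/-!
Write `x⁻¹ = A + θ` with `A = [x⁻¹]` of degree `d` and `θ = Ψ(x)`, `|θ| < 1`. Since `deg h = -1`,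
`[(1 - h)(θ + [hⁱA])] = [hⁱA] - [hⁱ⁺¹A]`, so `F_h` runs through the points `(θ + [hⁱA])⁻¹`,
`i = 0, …, d`, of degree `i - d`. For `i < d` the matrix of the step is lower unipotent with entry
`[hⁱA] - [hⁱ⁺¹A]`, and these telescope to `!![1, 0; A - [hⁱA], 1]`; at `i = d` the degree is `0`,
the matrix is `!![0, 1; 1, [hᵈA]]` and `F_h` lands on `θ = Ψ(x)`. So `d + 1` Farey steps make
one Artin step with matrix `!![0, 1; 1, A]`, and products of these are the convergent matrices.
-/

section

variable {F : Type} [Field F]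

theorem polyPart_coeff (x : LaurentSeries F) (j : ℤ) :
    (polyPart F x).coeff j = if j ≤ 0 then x.coeff j else 0 := rfl

theorem polyPart_add (x y : LaurentSeries F) :
    polyPart F (x + y) = polyPart F x + polyPart F y := by
  ext j
  simp only [polyPart_coeff, HahnSeries.coeff_add]
  split_ifs <;> simp

theorem polyPart_sub (x y : LaurentSeries F) :
    polyPart F (x - y) = polyPart F x - polyPart F y := by
  ext j
  simp only [polyPart_coeff, HahnSeries.coeff_sub]
  split_ifs <;> simp

theorem polyPart_polyPart (x : LaurentSeries F) : polyPart F (polyPart F x) = polyPart F x := by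
  ext j
  simp only [polyPart_coeff]
  split_ifs <;> rfl

theorem polyPart_fracPart (x : LaurentSeries F) : polyPart F (fracPart F x) = 0 := by
  rw [fracPart, polyPart_sub, polyPart_polyPart, sub_self]

theorem polyPart_eq_zero_iff {x : LaurentSeries F} : polyPart F x = 0 ↔ 1 ≤ x.orderTop := by
  simp only [HahnSeries.le_orderTop_iff_forall, HahnSeries.ext_iff, funext_iff, polyPart_coeff,
    HahnSeries.coeff_zero, ite_eq_right_iff]
  refine forall_congr' fun j => ?_
  have : (j : WithTop ℤ) < 1 ↔ j ≤ 0 := by norm_cast; omega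
  rw [this]

theorem polyPart_mul_eq_zero {x y : LaurentSeries F} (hx : polyPart F x = 0)
    (hy : polyPart F y = 0) : polyPart F (x * y) = 0 := by
  rw [polyPart_eq_zero_iff] at *
  rw [HahnSeries.orderTop_mul, ← add_zero (1 : WithTop ℤ)]
  exact add_le_add hx (zero_le_one.trans hy)

theorem orderTop_add_of_polyPart_eq_zero {θ z : LaurentSeries F} (hθ : polyPart F θ = 0)
    (hz : z.orderTop ≤ 0) : (θ + z).orderTop = z.orderTop :=
  HahnSeries.orderTop_add_eq_right <|
    hz.trans_lt (zero_lt_one.trans_le (polyPart_eq_zero_iff.mp hθ))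

theorem orderTop_polyPart {z : LaurentSeries F} (hz : z.orderTop ≤ 0) :
    (polyPart F z).orderTop = z.orderTop := by
  rw [show polyPart F z = z - fracPart F z by rw [fracPart, sub_sub_cancel]]
  exact HahnSeries.orderTop_sub <|
    hz.trans_lt (zero_lt_one.trans_le (polyPart_eq_zero_iff.mp (polyPart_fracPart z)))

theorem fdeg_eq_coe_iff {x : LaurentSeries F} {m : ℤ} :
    fdeg F x = (m : WithBot ℤ) ↔ x.orderTop = ((-m : ℤ) : WithTop ℤ) := by
  unfold fdeg
  split_ifs with hx
  · simp only [hx, HahnSeries.orderTop_zero, WithBot.bot_ne_coe, false_iff]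
    exact WithTop.top_ne_coe
  · rw [← HahnSeries.order_eq_orderTop_of_ne_zero hx]
    norm_cast
    omega

theorem LaurentSeries.orderTop_inv {x : LaurentSeries F} {m : ℤ} (hx : x.orderTop = m) :
    x⁻¹.orderTop = ((-m : ℤ) : WithTop ℤ) := by
  have hx0 : x ≠ 0 := by rintro rfl; simp at hx
  obtain ⟨n, hn⟩ := WithTop.ne_top_iff_exists.mp
    (HahnSeries.orderTop_ne_top.mpr (inv_ne_zero hx0))
  have hsum : x⁻¹.orderTop + x.orderTop = 0 := by
    rw [← HahnSeries.orderTop_mul, inv_mul_cancel₀ hx0, HahnSeries.orderTop_one]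
  rw [← hn] at hsum ⊢
  rw [hx] at hsum
  norm_cast at hsum ⊢
  omega

theorem polyPart_mul_polyPart {h : LaurentSeries F} (hh : polyPart F h = 0) (y : LaurentSeries F) :
    polyPart F (h * polyPart F y) = polyPart F (h * y) := by
  rw [show h * polyPart F y = h * y - h * fracPart F y by rw [fracPart]; ring, polyPart_sub,
    polyPart_mul_eq_zero hh (polyPart_fracPart y), sub_zero]

theorem polyPart_one_sub_mul {h θ : LaurentSeries F} (hh : polyPart F h = 0)
    (hθ : polyPart F θ = 0) (y : LaurentSeries F) :
    polyPart F ((1 - h) * (θ + polyPart F y)) = polyPart F y - polyPart F (h * y) := by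
  rw [show (1 - h) * (θ + polyPart F y) = θ + polyPart F y - (h * θ + h * polyPart F y) by ring,
    polyPart_sub, polyPart_add, polyPart_add, hθ, polyPart_mul_eq_zero hh hθ, polyPart_polyPart,
    polyPart_mul_polyPart hh, zero_add, zero_add]

theorem fareyAlg_inv_of_fdeg_ne_zero (h : LaurentSeries F) {u : LaurentSeries F} (hu : u ≠ 0)
    (hdeg : fdeg F u⁻¹ ≠ ((0 : ℤ) : WithBot ℤ)) :
    fareyAlg F h u⁻¹ = (u - polyPart F ((1 - h) * u))⁻¹ := by
  rw [fareyAlg, if_neg hdeg, inv_inv]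
  field_simp

theorem fareyAlg_inv_of_fdeg_eq_zero (h : LaurentSeries F) {u : LaurentSeries F} (hu : u ≠ 0)
    (hdeg : fdeg F u⁻¹ = ((0 : ℤ) : WithBot ℤ)) :
    fareyAlg F h u⁻¹ = u - polyPart F ((1 - h) * u) := by
  rw [fareyAlg, if_pos hdeg, inv_inv]
  field_simp

section Step

/- `θ` stands for `Ψ(x)` and `A` for the partial quotient `[x⁻¹]` of degree `dd`; the `i`-th point
of the `F_h`-orbit of `x` is `(θ + [hⁱA])⁻¹`. -/

variable {h A θ : LaurentSeries F} {dd : ℕ}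

theorem orderTop_pow_mul (hh : h.orderTop = 1) (hA : A.orderTop = ((-dd : ℤ) : WithTop ℤ))
    (i : ℕ) : (h ^ i * A).orderTop = ((i - dd : ℤ) : WithTop ℤ) := by
  induction i with
  | zero => simpa using hA
  | succ i ih =>
    rw [pow_succ', mul_assoc, HahnSeries.orderTop_mul, ih, hh, ← WithTop.coe_one,
      ← WithTop.coe_add]
    congr 1
    push_cast
    ring

theorem orderTop_add_polyPart_pow_mul (hh : h.orderTop = 1)
    (hA : A.orderTop = ((-dd : ℤ) : WithTop ℤ)) (hθ : polyPart F θ = 0) {i : ℕ} (hi : i ≤ dd) :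
    (θ + polyPart F (h ^ i * A)).orderTop = ((i - dd : ℤ) : WithTop ℤ) := by
  have hle : (h ^ i * A).orderTop ≤ 0 := by
    rw [orderTop_pow_mul hh hA]
    exact_mod_cast (show (i - dd : ℤ) ≤ 0 by omega)
  rw [orderTop_add_of_polyPart_eq_zero hθ ((orderTop_polyPart hle).trans_le hle),
    orderTop_polyPart hle, orderTop_pow_mul hh hA]

theorem add_polyPart_pow_mul_ne_zero (hh : h.orderTop = 1)
    (hA : A.orderTop = ((-dd : ℤ) : WithTop ℤ)) (hθ : polyPart F θ = 0) {i : ℕ} (hi : i ≤ dd) :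
    θ + polyPart F (h ^ i * A) ≠ 0 := by
  rw [← HahnSeries.orderTop_ne_top, orderTop_add_polyPart_pow_mul hh hA hθ hi]
  exact WithTop.coe_ne_top

theorem fdeg_inv_add_polyPart_pow_mul (hh : h.orderTop = 1)
    (hA : A.orderTop = ((-dd : ℤ) : WithTop ℤ)) (hθ : polyPart F θ = 0) {i : ℕ} (hi : i ≤ dd) :
    fdeg F (θ + polyPart F (h ^ i * A))⁻¹ = ((i - dd : ℤ) : WithBot ℤ) :=
  fdeg_eq_coe_iff.mpr (LaurentSeries.orderTop_inv (orderTop_add_polyPart_pow_mul hh hA hθ hi))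

theorem polyPart_one_sub_mul_add_polyPart_pow_mul (hh : h.orderTop = 1)
    (hθ : polyPart F θ = 0) (i : ℕ) :
    polyPart F ((1 - h) * (θ + polyPart F (h ^ i * A)))
      = polyPart F (h ^ i * A) - polyPart F (h ^ (i + 1) * A) := by
  rw [polyPart_one_sub_mul (polyPart_eq_zero_iff.mpr hh.ge) hθ, ← mul_assoc, ← pow_succ']

theorem fdeg_inv_add_polyPart_pow_mul_ne_zero (hh : h.orderTop = 1)
    (hA : A.orderTop = ((-dd : ℤ) : WithTop ℤ)) (hθ : polyPart F θ = 0) {i : ℕ} (hi : i < dd) :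
    fdeg F (θ + polyPart F (h ^ i * A))⁻¹ ≠ ((0 : ℤ) : WithBot ℤ) := by
  rw [fdeg_inv_add_polyPart_pow_mul hh hA hθ hi.le]
  exact_mod_cast (show (i - dd : ℤ) ≠ 0 by omega)

theorem fdeg_inv_add_polyPart_pow_mul_eq_zero (hh : h.orderTop = 1)
    (hA : A.orderTop = ((-dd : ℤ) : WithTop ℤ)) (hθ : polyPart F θ = 0) :
    fdeg F (θ + polyPart F (h ^ dd * A))⁻¹ = ((0 : ℤ) : WithBot ℤ) := by
  rw [fdeg_inv_add_polyPart_pow_mul hh hA hθ le_rfl, sub_self]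

theorem algMat_of_lt (hh : h.orderTop = 1) (hA : A.orderTop = ((-dd : ℤ) : WithTop ℤ))
    (hθ : polyPart F θ = 0) {i : ℕ} (hi : i < dd) :
    algMat F h (θ + polyPart F (h ^ i * A))⁻¹
      = !![1, 0; polyPart F (h ^ i * A) - polyPart F (h ^ (i + 1) * A), 1] := by
  rw [algMat, if_neg (fdeg_inv_add_polyPart_pow_mul_ne_zero hh hA hθ hi), inv_inv,
    polyPart_one_sub_mul_add_polyPart_pow_mul hh hθ]

theorem fareyAlg_of_lt (hh : h.orderTop = 1) (hA : A.orderTop = ((-dd : ℤ) : WithTop ℤ))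
    (hθ : polyPart F θ = 0) {i : ℕ} (hi : i < dd) :
    fareyAlg F h (θ + polyPart F (h ^ i * A))⁻¹ = (θ + polyPart F (h ^ (i + 1) * A))⁻¹ := by
  rw [fareyAlg_inv_of_fdeg_ne_zero h (add_polyPart_pow_mul_ne_zero hh hA hθ hi.le)
    (fdeg_inv_add_polyPart_pow_mul_ne_zero hh hA hθ hi),
    polyPart_one_sub_mul_add_polyPart_pow_mul hh hθ]
  congr 1
  ring

theorem polyPart_pow_succ_mul (hh : h.orderTop = 1) (hA : A.orderTop = ((-dd : ℤ) : WithTop ℤ)) :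
    polyPart F (h ^ (dd + 1) * A) = 0 := by
  rw [polyPart_eq_zero_iff, orderTop_pow_mul hh hA]
  exact_mod_cast (show (1 : ℤ) ≤ (dd + 1 : ℕ) - dd by omega)

theorem algMat_of_eq (hh : h.orderTop = 1) (hA : A.orderTop = ((-dd : ℤ) : WithTop ℤ))
    (hθ : polyPart F θ = 0) :
    algMat F h (θ + polyPart F (h ^ dd * A))⁻¹ = !![0, 1; 1, polyPart F (h ^ dd * A)] := by
  rw [algMat, if_pos (fdeg_inv_add_polyPart_pow_mul_eq_zero hh hA hθ), inv_inv,
    polyPart_one_sub_mul_add_polyPart_pow_mul hh hθ, polyPart_pow_succ_mul hh hA, sub_zero]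

theorem fareyAlg_of_eq (hh : h.orderTop = 1) (hA : A.orderTop = ((-dd : ℤ) : WithTop ℤ))
    (hθ : polyPart F θ = 0) : fareyAlg F h (θ + polyPart F (h ^ dd * A))⁻¹ = θ := by
  rw [fareyAlg_inv_of_fdeg_eq_zero h (add_polyPart_pow_mul_ne_zero hh hA hθ le_rfl)
    (fdeg_inv_add_polyPart_pow_mul_eq_zero hh hA hθ),
    polyPart_one_sub_mul_add_polyPart_pow_mul hh hθ, polyPart_pow_succ_mul hh hA, sub_zero,
    add_sub_cancel_right]

end Step

def algMatProd (h x : LaurentSeries F) (n : ℕ) : Matrix (Fin 2) (Fin 2) (LaurentSeries F) :=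
  ((List.range n).map fun j => algMat F h ((fareyAlg F h)^[j] x)).prod

theorem algMatProd_succ (h x : LaurentSeries F) (n : ℕ) :
    algMatProd h x (n + 1) = algMatProd h x n * algMat F h ((fareyAlg F h)^[n] x) := by
  simp only [algMatProd, List.range_succ, List.map_append, List.prod_append, List.map_singleton,
    List.prod_singleton]

theorem algMatProd_add (h x : LaurentSeries F) (m n : ℕ) :
    algMatProd h x (m + n) = algMatProd h x m * algMatProd h ((fareyAlg F h)^[m] x) n := by
  simp only [algMatProd, List.range_add, List.map_append, List.prod_append, List.map_map,
    Function.comp_def, ← Function.iterate_add_apply, add_comm]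

section Block

variable {h x : LaurentSeries F} {dd : ℕ}

theorem iterate_fareyAlg_of_le (hh : h.orderTop = 1)
    (hA : (polyPart F x⁻¹).orderTop = ((-dd : ℤ) : WithTop ℤ)) {i : ℕ} (hi : i ≤ dd) :
    (fareyAlg F h)^[i] x = (fracPart F x⁻¹ + polyPart F (h ^ i * polyPart F x⁻¹))⁻¹ := by
  induction i with
  | zero => rw [pow_zero, one_mul, polyPart_polyPart, fracPart, sub_add_cancel, inv_inv]; rfl
  | succ i ih =>
    rw [Function.iterate_succ_apply', ih (by omega),
      fareyAlg_of_lt hh hA (polyPart_fracPart _) (by omega)]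

theorem algMatProd_of_le (hh : h.orderTop = 1)
    (hA : (polyPart F x⁻¹).orderTop = ((-dd : ℤ) : WithTop ℤ)) {i : ℕ} (hi : i ≤ dd) :
    algMatProd h x i = !![1, 0; polyPart F x⁻¹ - polyPart F (h ^ i * polyPart F x⁻¹), 1] := by
  induction i with
  | zero =>
    rw [pow_zero, one_mul, polyPart_polyPart, sub_self, ← Matrix.one_fin_two]
    rfl
  | succ i ih =>
    rw [algMatProd_succ, ih (by omega), iterate_fareyAlg_of_le hh hA (by omega),
      algMat_of_lt hh hA (polyPart_fracPart _) (by omega), Matrix.mul_fin_two]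
    ring_nf

theorem iterate_fareyAlg_degree_succ (hh : h.orderTop = 1)
    (hA : (polyPart F x⁻¹).orderTop = ((-dd : ℤ) : WithTop ℤ)) :
    (fareyAlg F h)^[dd + 1] x = artin F x := by
  rw [Function.iterate_succ_apply', iterate_fareyAlg_of_le hh hA le_rfl,
    fareyAlg_of_eq hh hA (polyPart_fracPart _)]
  rfl

theorem algMatProd_degree_succ (hh : h.orderTop = 1)
    (hA : (polyPart F x⁻¹).orderTop = ((-dd : ℤ) : WithTop ℤ)) :
    algMatProd h x (dd + 1) = !![0, 1; 1, polyPart F x⁻¹] := by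
  rw [algMatProd_succ, algMatProd_of_le hh hA le_rfl, iterate_fareyAlg_of_le hh hA le_rfl,
    algMat_of_eq hh hA (polyPart_fracPart _), Matrix.mul_fin_two]
  ring_nf

end Block

theorem pquot_succ (f : LaurentSeries F) (n : ℕ) :
    pquot F f (n + 1) = polyPart F ((artin F)^[n] f)⁻¹ := rfl

theorem Pc_add_two (f : LaurentSeries F) (n : ℕ) :
    Pc F f (n + 2) = pquot F f (n + 1) * Pc F f (n + 1) + Pc F f n := rfl

theorem Qc_add_two (f : LaurentSeries F) (n : ℕ) :
    Qc F f (n + 2) = pquot F f (n + 1) * Qc F f (n + 1) + Qc F f n := rfl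

section Convergents

variable {h f : LaurentSeries F} {d : ℕ → ℕ} {k : ℕ}

theorem iterate_fareyAlg_sum (hh : h.orderTop = 1)
    (hd : ∀ n, 1 ≤ n → n ≤ k → fdeg F (pquot F f n) = ((d n : ℤ) : WithBot ℤ)) :
    (fareyAlg F h)^[∑ n ∈ Finset.Icc 1 k, (d n + 1)] f = (artin F)^[k] f := by
  induction k with
  | zero => rfl
  | succ k ih =>
    rw [Finset.sum_Icc_succ_top (by omega), add_comm, Function.iterate_add_apply,
      ih fun n h1 h2 => hd n h1 (by omega),
      iterate_fareyAlg_degree_succ (x := (artin F)^[k] f) hh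
        (fdeg_eq_coe_iff.mp (hd (k + 1) (by omega) le_rfl)),
      Function.iterate_succ_apply']

theorem algMatProd_sum (hh : h.orderTop = 1)
    (hd : ∀ n, 1 ≤ n → n ≤ k → fdeg F (pquot F f n) = ((d n : ℤ) : WithBot ℤ)) :
    algMatProd h f (∑ n ∈ Finset.Icc 1 k, (d n + 1))
      = !![Pc F f k, Pc F f (k + 1); Qc F f k, Qc F f (k + 1)] := by
  induction k with
  | zero => exact Matrix.one_fin_two
  | succ k ih =>
    have hd' : ∀ n, 1 ≤ n → n ≤ k → fdeg F (pquot F f n) = ((d n : ℤ) : WithBot ℤ) :=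
      fun n h1 h2 => hd n h1 (by omega)
    rw [Finset.sum_Icc_succ_top (by omega), algMatProd_add, ih hd', iterate_fareyAlg_sum hh hd',
      algMatProd_degree_succ (x := (artin F)^[k] f) hh
        (fdeg_eq_coe_iff.mp (hd (k + 1) (by omega) le_rfl)),
      Matrix.mul_fin_two, Pc_add_two, Qc_add_two, pquot_succ]
    ring_nf

end Convergents

end

theorem alg_matrix_product
    (h : LaurentSeries Fq) (hh : fdeg Fq h = ((-1 : ℤ) : WithBot ℤ))
    (f : LaurentSeries Fq)
    (k : ℕ) (d : ℕ → ℕ)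
    (hd : ∀ n, 1 ≤ n → n ≤ k + 1 → fdeg Fq (pquot Fq f n) = ((d n : ℤ) : WithBot ℤ))
    (i : ℕ) (hi : i ≤ d (k + 1))
    (ℓ : ℕ) (hℓ : ℓ = ∑ n ∈ Finset.Icc 1 k, (d n + 1) + i) :
    ((List.range ℓ).map (fun j => algMat Fq h ((fareyAlg Fq h)^[j] f))).prod
      = !![Pc Fq f (k + 2) - polyPart Fq (h ^ i * pquot Fq f (k + 1)) * Pc Fq f (k + 1),
             Pc Fq f (k + 1);
           Qc Fq f (k + 2) - polyPart Fq (h ^ i * pquot Fq f (k + 1)) * Qc Fq f (k + 1),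
             Qc Fq f (k + 1)] := by
  have hh' : h.orderTop = 1 := by simpa using fdeg_eq_coe_iff.mp hh
  have hdk : ∀ n, 1 ≤ n → n ≤ k → fdeg Fq (pquot Fq f n) = ((d n : ℤ) : WithBot ℤ) :=
    fun n h1 h2 => hd n h1 (by omega)
  change algMatProd h f ℓ = _
  rw [hℓ, algMatProd_add, algMatProd_sum hh' hdk, iterate_fareyAlg_sum hh' hdk,
    algMatProd_of_le (x := (artin Fq)^[k] f) hh'
      (fdeg_eq_coe_iff.mp (hd (k + 1) (by omega) le_rfl)) hi,
    Matrix.mul_fin_two, Pc_add_two, Qc_add_two, pquot_succ]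
  ring_nf

end
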